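/- arXiv:2506.03133 — 4 statements merged into one kernel-verified Lean document; each statement's English description precedes it below -/
import Mathlib

section
/- Let A ∈ ℝ^{m×n} have compact SVD A = UΣVᵀ with U ∈ ℝ^{m×r_A}, V ∈ ℝ^{n×r_A} having orthonormal columns, and σ₁(A) = ‖Σ‖₂. Let X ∈ St(m,r), Y ∈ St(n,r) with r ≥ r_A, and set Θ = XᵀAY. Then ‖XΘYᵀ − A‖_F ≤ ‖Σ‖₂ (‖(I_m − XXᵀ)U‖_F + ‖Vᵀ(I_n − YYᵀ)‖_F). -/
open Matrix

/-- Frobenius norm of a real matrix. -/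
noncomputable def frobNorm {a b : ℕ} (M : Matrix (Fin a) (Fin b) ℝ) : ℝ :=
  Real.sqrt (Mᵀ * M).trace

/-- Spectral norm of a real matrix: square root of the largest eigenvalue of `Mᵀ M`. -/
noncomputable def specNorm {a b : ℕ} (M : Matrix (Fin a) (Fin b) ℝ) : ℝ :=
  Real.sqrt (sSup {e : ℝ | Module.End.HasEigenvalue (Matrix.toLin' (Mᵀ * M)) e})

section Aux

lemma trace_conj {a b : ℕ} (M : Matrix (Fin a) (Fin b) ℝ) :
    (Mᵀ * M).trace = ∑ j, ∑ i, (M i j)^2 := by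
  simp [Matrix.trace, Matrix.mul_apply, Matrix.diag, sq]

lemma trace_conj_nonneg {a b : ℕ} (M : Matrix (Fin a) (Fin b) ℝ) :
    0 ≤ (Mᵀ * M).trace := by
  rw [trace_conj]; positivity

attribute [local instance] Matrix.frobeniusSeminormedAddCommGroup

lemma frobNorm_eq_norm {a b : ℕ} (M : Matrix (Fin a) (Fin b) ℝ) :
    frobNorm M = ‖M‖ := by
  rw [Matrix.frobenius_norm_def, frobNorm, trace_conj, ← Real.sqrt_eq_rpow]
  rw [Finset.sum_comm]
  congr 1
  simp [Real.norm_eq_abs, sq_abs]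

lemma frobNorm_triangle {a b : ℕ} (M N : Matrix (Fin a) (Fin b) ℝ) :
    frobNorm (M + N) ≤ frobNorm M + frobNorm N := by
  simp only [frobNorm_eq_norm]; exact norm_add_le M N

lemma frobNorm_neg {a b : ℕ} (M : Matrix (Fin a) (Fin b) ℝ) :
    frobNorm (-M) = frobNorm M := by
  simp only [frobNorm_eq_norm]; exact norm_neg M

lemma mul_diag_apply {a c : ℕ} (B : Matrix (Fin a) (Fin c) ℝ) (S : Matrix (Fin c) (Fin c) ℝ)
    (hSd : S.IsDiag) (i : Fin a) (j : Fin c) : (B * S) i j = B i j * S j j := by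
  rw [Matrix.mul_apply]
  rw [Finset.sum_eq_single j]
  · intro k _ hk
    rw [hSd hk, mul_zero]
  · simp

lemma diag_mul_apply {a c : ℕ} (S : Matrix (Fin c) (Fin c) ℝ) (C : Matrix (Fin c) (Fin a) ℝ)
    (hSd : S.IsDiag) (i : Fin c) (j : Fin a) : (S * C) i j = S i i * C i j := by
  rw [Matrix.mul_apply]
  rw [Finset.sum_eq_single i]
  · intro k _ hk
    rw [hSd hk.symm, zero_mul]
  · simp

lemma frobNorm_mul_diag_le {a c : ℕ} (B : Matrix (Fin a) (Fin c) ℝ) (S : Matrix (Fin c) (Fin c) ℝ)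
    (hSd : S.IsDiag) {σ : ℝ} (hσ : 0 ≤ σ) (hb : ∀ j, |S j j| ≤ σ) :
    frobNorm (B * S) ≤ σ * frobNorm B := by
  have key : ((B * S)ᵀ * (B * S)).trace ≤ σ^2 * (Bᵀ * B).trace := by
    rw [trace_conj, trace_conj, Finset.mul_sum]
    apply Finset.sum_le_sum
    intro j _
    rw [Finset.mul_sum]
    apply Finset.sum_le_sum
    intro i _
    rw [mul_diag_apply B S hSd, mul_pow, mul_comm (σ^2)]
    apply mul_le_mul_of_nonneg_left _ (sq_nonneg _)
    calc (S j j)^2 = |S j j|^2 := (sq_abs _).symm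
    _ ≤ σ^2 := by apply pow_le_pow_left₀ (abs_nonneg _) (hb j)
  calc frobNorm (B * S) ≤ Real.sqrt (σ^2 * (Bᵀ * B).trace) := Real.sqrt_le_sqrt key
  _ = σ * frobNorm B := by
      rw [Real.sqrt_mul (sq_nonneg σ), Real.sqrt_sq hσ, frobNorm]

lemma frobNorm_diag_mul_le {a c : ℕ} (S : Matrix (Fin c) (Fin c) ℝ) (C : Matrix (Fin c) (Fin a) ℝ)
    (hSd : S.IsDiag) {σ : ℝ} (hσ : 0 ≤ σ) (hb : ∀ j, |S j j| ≤ σ) :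
    frobNorm (S * C) ≤ σ * frobNorm C := by
  have key : ((S * C)ᵀ * (S * C)).trace ≤ σ^2 * (Cᵀ * C).trace := by
    rw [trace_conj, trace_conj, Finset.mul_sum]
    apply Finset.sum_le_sum
    intro j _
    rw [Finset.mul_sum]
    apply Finset.sum_le_sum
    intro i _
    rw [diag_mul_apply S C hSd, mul_pow]
    apply mul_le_mul_of_nonneg_right _ (sq_nonneg _)
    calc (S i i)^2 = |S i i|^2 := (sq_abs _).symm
    _ ≤ σ^2 := by apply pow_le_pow_left₀ (abs_nonneg _) (hb i)
  calc frobNorm (S * C) ≤ Real.sqrt (σ^2 * (Cᵀ * C).trace) := Real.sqrt_le_sqrt key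
  _ = σ * frobNorm C := by
      rw [Real.sqrt_mul (sq_nonneg σ), Real.sqrt_sq hσ, frobNorm]

lemma frobNorm_mul_contract {a b c e : ℕ} (M : Matrix (Fin a) (Fin b) ℝ)
    (Q : Matrix (Fin b) (Fin c) ℝ) (R : Matrix (Fin e) (Fin b) ℝ)
    (h : Q * Qᵀ = 1 - Rᵀ * R) :
    frobNorm (M * Q) ≤ frobNorm M := by
  have h1 : ((M * Q)ᵀ * (M * Q)).trace = ((Mᵀ * M) * (Q * Qᵀ)).trace := by
    rw [Matrix.transpose_mul]
    calc (Qᵀ * Mᵀ * (M * Q)).trace = (Qᵀ * (Mᵀ * M * Q)).trace := by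
          simp only [Matrix.mul_assoc]
    _ = ((Mᵀ * M * Q) * Qᵀ).trace := Matrix.trace_mul_comm _ _
    _ = ((Mᵀ * M) * (Q * Qᵀ)).trace := by simp only [Matrix.mul_assoc]
  have h2 : ((Mᵀ * M) * (Rᵀ * R)).trace = ((M * Rᵀ)ᵀ * (M * Rᵀ)).trace := by
    calc ((Mᵀ * M) * (Rᵀ * R)).trace = ((Mᵀ * M * Rᵀ) * R).trace := by
          simp only [Matrix.mul_assoc]
    _ = (R * (Mᵀ * M * Rᵀ)).trace := Matrix.trace_mul_comm _ _
    _ = ((M * Rᵀ)ᵀ * (M * Rᵀ)).trace := by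
        rw [Matrix.transpose_mul, Matrix.transpose_transpose]
        simp only [Matrix.mul_assoc]
  have key : ((M * Q)ᵀ * (M * Q)).trace ≤ (Mᵀ * M).trace := by
    rw [h1, h, Matrix.mul_sub, Matrix.mul_one, Matrix.trace_sub]
    have := trace_conj_nonneg (M * Rᵀ)
    rw [← h2] at this
    linarith
  exact Real.sqrt_le_sqrt key

lemma frobNorm_isometry {a b c : ℕ} (U : Matrix (Fin a) (Fin b) ℝ) (hU : Uᵀ * U = 1)
    (C : Matrix (Fin b) (Fin c) ℝ) : frobNorm (U * C) = frobNorm C := by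
  unfold frobNorm
  congr 1
  rw [Matrix.transpose_mul, Matrix.mul_assoc, ← Matrix.mul_assoc Uᵀ, hU, Matrix.one_mul]

lemma specNorm_bound {rA : ℕ} (S : Matrix (Fin rA) (Fin rA) ℝ) (hSd : S.IsDiag) (i : Fin rA) :
    |S i i| ≤ specNorm S := by
  have hsymm : Sᵀ = S := by
    ext a b
    by_cases h : a = b
    · subst h; simp
    · rw [Matrix.transpose_apply, hSd h, hSd (Ne.symm h)]
  set d : Fin rA → ℝ := fun i => S i i ^ 2 with hd
  have hD : Sᵀ * S = Matrix.diagonal d := by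
    rw [hsymm]
    ext a b
    by_cases h : a = b
    · subst h
      rw [Matrix.mul_apply, Finset.sum_eq_single a]
      · simp [hd, sq]
      · intro k _ hk; rw [hSd hk.symm, zero_mul]
      · simp
    · rw [Matrix.diagonal_apply_ne _ h, Matrix.mul_apply, Finset.sum_eq_zero]
      intro k _
      by_cases hk : a = k
      · subst hk; rw [hSd h, mul_zero]
      · rw [hSd hk, zero_mul]
  have hset : {e : ℝ | Module.End.HasEigenvalue (Matrix.toLin' (Sᵀ * S)) e} = Set.range d := by
    ext μ
    rw [Set.mem_setOf_eq, hD, hasEigenvalue_toLin'_diagonal_iff]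
    rfl
  have hle : d i ≤ sSup (Set.range d) :=
    le_csSup (Set.finite_range d).bddAbove ⟨i, rfl⟩
  calc |S i i| = Real.sqrt (d i) := by rw [hd]; exact (Real.sqrt_sq_eq_abs _).symm
  _ ≤ specNorm S := by rw [specNorm, hset]; exact Real.sqrt_le_sqrt hle

end Aux

/-- Let `A = U Σ Vᵀ` be a compact SVD, `X ∈ St(m,r)`, `Y ∈ St(n,r)` with `r ≥ r_A`,
and `Θ = Xᵀ A Y`. Then
`‖XΘYᵀ − A‖_F ≤ ‖Σ‖₂ (‖(I − XXᵀ)U‖_F + ‖Vᵀ(I − YYᵀ)‖_F)`. -/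
theorem approx_error_bound {m n r rA : ℕ} (hr : rA ≤ r)
    (U : Matrix (Fin m) (Fin rA) ℝ) (hU : Uᵀ * U = 1)
    (V : Matrix (Fin n) (Fin rA) ℝ) (hV : Vᵀ * V = 1)
    (S : Matrix (Fin rA) (Fin rA) ℝ) (hSd : S.IsDiag) (hSpos : ∀ i, 0 < S i i)
    (X : Matrix (Fin m) (Fin r) ℝ) (hX : Xᵀ * X = 1)
    (Y : Matrix (Fin n) (Fin r) ℝ) (hY : Yᵀ * Y = 1) :
    frobNorm (X * (Xᵀ * (U * S * Vᵀ) * Y) * Yᵀ - U * S * Vᵀ) ≤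
      specNorm S * (frobNorm ((1 - X * Xᵀ) * U) + frobNorm (Vᵀ * (1 - Y * Yᵀ))) := by
  set A : Matrix (Fin m) (Fin n) ℝ := U * S * Vᵀ with hA
  set σ : ℝ := specNorm S with hσdef
  have hσ0 : 0 ≤ σ := Real.sqrt_nonneg _
  have hb : ∀ i, |S i i| ≤ σ := fun i => specNorm_bound S hSd i
  set T1 : Matrix (Fin m) (Fin n) ℝ := (1 - X * Xᵀ) * A * (Y * Yᵀ) with hT1
  set T2 : Matrix (Fin m) (Fin n) ℝ := A * (1 - Y * Yᵀ) with hT2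
  have hdec : X * (Xᵀ * A * Y) * Yᵀ - A = -T1 + -T2 := by
    rw [hT1, hT2, hA]
    simp only [Matrix.sub_mul, Matrix.mul_sub, Matrix.one_mul, Matrix.mul_one, Matrix.mul_assoc,
      neg_sub]
    abel
  have hstep : frobNorm (X * (Xᵀ * A * Y) * Yᵀ - A) ≤ frobNorm T1 + frobNorm T2 := by
    rw [hdec]
    calc frobNorm (-T1 + -T2) ≤ frobNorm (-T1) + frobNorm (-T2) := frobNorm_triangle _ _
    _ = frobNorm T1 + frobNorm T2 := by rw [frobNorm_neg, frobNorm_neg]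
  -- bound T1
  have hY' : ∀ {k : ℕ} (Z : Matrix (Fin r) (Fin k) ℝ), Yᵀ * (Y * Z) = Z := by
    intro k Z; rw [← Matrix.mul_assoc, hY, Matrix.one_mul]
  have hQ : (Vᵀ * (Y * Yᵀ)) * (Vᵀ * (Y * Yᵀ))ᵀ =
      1 - ((1 - Y * Yᵀ) * V)ᵀ * ((1 - Y * Yᵀ) * V) := by
    simp only [Matrix.transpose_mul, Matrix.transpose_sub, Matrix.transpose_one,
      Matrix.transpose_transpose, Matrix.sub_mul, Matrix.mul_sub, Matrix.one_mul,
      Matrix.mul_one, Matrix.mul_assoc, hY', hV]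
    abel
  have hbound1 : frobNorm T1 ≤ σ * frobNorm ((1 - X * Xᵀ) * U) := by
    have heq : T1 = ((1 - X * Xᵀ) * U * S) * (Vᵀ * (Y * Yᵀ)) := by
      rw [hT1, hA]; simp only [Matrix.mul_assoc]
    rw [heq]
    calc frobNorm (((1 - X * Xᵀ) * U * S) * (Vᵀ * (Y * Yᵀ)))
        ≤ frobNorm ((1 - X * Xᵀ) * U * S) :=
          frobNorm_mul_contract _ _ ((1 - Y * Yᵀ) * V) hQ
    _ ≤ σ * frobNorm ((1 - X * Xᵀ) * U) := frobNorm_mul_diag_le _ S hSd hσ0 hb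
  -- bound T2
  have hbound2 : frobNorm T2 ≤ σ * frobNorm (Vᵀ * (1 - Y * Yᵀ)) := by
    have heq : T2 = U * (S * (Vᵀ * (1 - Y * Yᵀ))) := by
      rw [hT2, hA]; simp only [Matrix.mul_assoc]
    rw [heq, frobNorm_isometry U hU]
    exact frobNorm_diag_mul_le S _ hSd hσ0 hb
  calc frobNorm (X * (Xᵀ * A * Y) * Yᵀ - A) ≤ frobNorm T1 + frobNorm T2 := hstep
  _ ≤ σ * frobNorm ((1 - X * Xᵀ) * U) + σ * frobNorm (Vᵀ * (1 - Y * Yᵀ)) := by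
      exact add_le_add hbound1 hbound2
  _ = σ * (frobNorm ((1 - X * Xᵀ) * U) + frobNorm (Vᵀ * (1 - Y * Yᵀ))) := by ring
end

section
/- Let A ∈ ℝ^{m×n} with compact SVD A = UΣVᵀ, σ₁(Σ) = 1. Let X ∈ St(m,r), Y ∈ St(n,r), Θ = XᵀAY, and define the Riemannian gradient E = −(I_m − XXᵀ)AYΘᵀ. Then with Φ = UᵀX and Ψ = VᵀY, the matrix EᵀE satisfies σ₁(EᵀE) ≤ σ₁(I_{r_A} − ΦΦᵀ). -/
/-!
Since `Xᵀ X = 1`, the matrix `I − XXᵀ` is a symmetric idempotent, so with `C = Σ Vᵀ Y Θᵀ` one has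
`EᵀE = Cᵀ (I − ΦΦᵀ) C`. The spectral norm `σ₁` of a real matrix is its `ℓ²` operator norm, which is
submultiplicative and at most `1` on `Σ` and on all the Stiefel factors, hence `‖C‖ ≤ 1` and
`σ₁(EᵀE) ≤ σ₁(I − ΦΦᵀ)`.
-/

open Matrix

open scoped Matrix.Norms.L2Operator ComplexOrder

namespace Matrix

variable {𝕜 : Type*} [RCLike 𝕜] {m n k : Type*} [Fintype m] [Fintype n]

lemma l2_opNorm_le_one_of_conjTranspose_mul_self_eq_one [DecidableEq n] {U : Matrix m n 𝕜}
    (hU : Uᴴ * U = 1) : ‖U‖ ≤ 1 := by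
  have h : ‖U‖ * ‖U‖ ≤ 1 := by
    rw [← l2_opNorm_conjTranspose_mul_self, hU, ← diagonal_one, l2_opNorm_diagonal]
    exact pi_norm_le_iff_of_nonneg zero_le_one |>.mpr fun _ => by simp
  nlinarith [norm_nonneg U]

lemma l2_opNorm_mul_le_one [Fintype k] [DecidableEq n] [DecidableEq k] {A : Matrix m n 𝕜}
    {B : Matrix n k 𝕜} (hA : ‖A‖ ≤ 1) (hB : ‖B‖ ≤ 1) : ‖A * B‖ ≤ 1 :=
  (l2_opNorm_mul A B).trans (mul_le_one₀ hA (norm_nonneg B) hB)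

lemma IsHermitian.l2_opNorm_eq [DecidableEq n] {A : Matrix n n 𝕜} (hA : A.IsHermitian) :
    ‖A‖ = ‖hA.eigenvalues‖ := by
  conv_lhs => rw [hA.spectral_theorem]
  rw [Unitary.conjStarAlgAut_apply, ← Unitary.coe_star, CStarRing.norm_mul_coe_unitary,
    CStarRing.norm_coe_unitary_mul, l2_opNorm_diagonal]
  simp [Pi.norm_def]

lemma PosSemidef.sSup_spectrum_eq_l2_opNorm [DecidableEq n] {A : Matrix n n 𝕜}
    (hA : A.PosSemidef) : sSup (spectrum ℝ A) = ‖A‖ := by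
  rw [hA.isHermitian.l2_opNorm_eq, hA.isHermitian.spectrum_real_eq_range_eigenvalues]
  refine le_antisymm (Real.sSup_le ?_ (norm_nonneg _)) ?_
  · rintro _ ⟨i, rfl⟩
    exact (Real.le_norm_self _).trans (norm_le_pi_norm _ i)
  · refine pi_norm_le_iff_of_nonneg (Real.sSup_nonneg ?_) |>.mpr fun i => ?_
    · rintro _ ⟨i, rfl⟩
      exact hA.eigenvalues_nonneg i
    · rw [Real.norm_of_nonneg (hA.eigenvalues_nonneg i)]
      exact le_csSup (Set.finite_range _).bddAbove ⟨i, rfl⟩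

lemma l2_opNorm_transpose [DecidableEq m] [DecidableEq n] (A : Matrix m n ℝ) : ‖Aᵀ‖ = ‖A‖ := by
  rw [← conjTranspose_eq_transpose_of_trivial, l2_opNorm_conjTranspose]

lemma l2_opNorm_le_one_of_transpose_mul_self_eq_one [DecidableEq n] {U : Matrix m n ℝ}
    (hU : Uᵀ * U = 1) : ‖U‖ ≤ 1 :=
  l2_opNorm_le_one_of_conjTranspose_mul_self_eq_one (by rwa [conjTranspose_eq_transpose_of_trivial])

lemma transpose_mul_self_projection_mul [Fintype k] [DecidableEq m] [DecidableEq k] {r p : Type*}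
    [Fintype r] [DecidableEq r] {U : Matrix m k ℝ} (hU : Uᵀ * U = 1) {X : Matrix m r ℝ}
    (hX : Xᵀ * X = 1) (C : Matrix k p ℝ) :
    ((1 - X * Xᵀ) * U * C)ᵀ * ((1 - X * Xᵀ) * U * C) = Cᵀ * (1 - (Uᵀ * X) * (Uᵀ * X)ᵀ) * C := by
  have hproj : (1 - X * Xᵀ)ᵀ * (1 - X * Xᵀ) = 1 - X * Xᵀ := by
    simp only [transpose_sub, transpose_one, transpose_mul, transpose_transpose, sub_mul, mul_sub,
      one_mul, mul_one, Matrix.mul_assoc]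
    rw [← Matrix.mul_assoc Xᵀ, hX, Matrix.one_mul]
    abel
  calc _ = Cᵀ * (Uᵀ * ((1 - X * Xᵀ)ᵀ * (1 - X * Xᵀ)) * U) * C := by
        simp only [transpose_mul, Matrix.mul_assoc]
    _ = _ := by
        rw [hproj]
        simp only [transpose_mul, transpose_transpose, Matrix.mul_sub, Matrix.sub_mul,
          Matrix.mul_one, hU, Matrix.mul_assoc]

end Matrix

theorem specNorm_eq_l2_opNorm {a b : ℕ} (M : Matrix (Fin a) (Fin b) ℝ) : specNorm M = ‖M‖ := by
  have hM : (Mᵀ * M).PosSemidef := by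
    simpa [conjTranspose_eq_transpose_of_trivial] using posSemidef_conjTranspose_mul_self M
  have h : {e : ℝ | Module.End.HasEigenvalue (Mᵀ * M).toLin' e} = spectrum ℝ (Mᵀ * M) := by
    ext e
    rw [Set.mem_ofPred_eq, Module.End.hasEigenvalue_iff_mem_spectrum, spectrum_toLin']
  rw [specNorm, h, hM.sSup_spectrum_eq_l2_opNorm, ← conjTranspose_eq_transpose_of_trivial,
    l2_opNorm_conjTranspose_mul_self, Real.sqrt_mul_self (norm_nonneg M)]

theorem riemannian_grad_norm_bound_general {m n r rA : ℕ}
    (U : Matrix (Fin m) (Fin rA) ℝ) (hU : Uᵀ * U = 1)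
    (V : Matrix (Fin n) (Fin rA) ℝ) (hV : Vᵀ * V = 1)
    (S : Matrix (Fin rA) (Fin rA) ℝ)
    (hS1 : specNorm S = 1)
    (X : Matrix (Fin m) (Fin r) ℝ) (hX : Xᵀ * X = 1)
    (Y : Matrix (Fin n) (Fin r) ℝ) (hY : Yᵀ * Y = 1)
    (A : Matrix (Fin m) (Fin n) ℝ) (hA : A = U * S * Vᵀ)
    (Θ : Matrix (Fin r) (Fin r) ℝ) (hΘ : Θ = Xᵀ * A * Y)
    (E : Matrix (Fin m) (Fin r) ℝ) (hE : E = -((1 - X * Xᵀ) * A * Y * Θᵀ)) :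
    specNorm (Eᵀ * E) ≤ specNorm (1 - (Uᵀ * X) * (Uᵀ * X)ᵀ) := by
  set P := 1 - (Uᵀ * X) * (Uᵀ * X)ᵀ
  set C := S * Vᵀ * Y * Θᵀ
  have hS : ‖S‖ ≤ 1 := (specNorm_eq_l2_opNorm S ▸ hS1).le
  have hU1 := l2_opNorm_le_one_of_transpose_mul_self_eq_one hU
  have hX1 := l2_opNorm_transpose X ▸ l2_opNorm_le_one_of_transpose_mul_self_eq_one hX
  have hV1 := l2_opNorm_transpose V ▸ l2_opNorm_le_one_of_transpose_mul_self_eq_one hV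
  have hY1 := l2_opNorm_le_one_of_transpose_mul_self_eq_one hY
  have hΘ1 : ‖Θᵀ‖ ≤ 1 := by
    rw [l2_opNorm_transpose, hΘ, hA]
    exact l2_opNorm_mul_le_one (l2_opNorm_mul_le_one hX1
      (l2_opNorm_mul_le_one (l2_opNorm_mul_le_one hU1 hS) hV1)) hY1
  have hC : ‖C‖ ≤ 1 :=
    l2_opNorm_mul_le_one (l2_opNorm_mul_le_one (l2_opNorm_mul_le_one hS hV1) hY1) hΘ1
  have hEC : E = -((1 - X * Xᵀ) * U * C) := by
    rw [hE, hA]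
    simp only [C, Matrix.mul_assoc]
  rw [specNorm_eq_l2_opNorm, specNorm_eq_l2_opNorm, hEC, transpose_neg, Matrix.neg_mul,
    Matrix.mul_neg, neg_neg, transpose_mul_self_projection_mul hU hX]
  calc ‖Cᵀ * P * C‖ ≤ ‖Cᵀ‖ * ‖P‖ * ‖C‖ :=
        (l2_opNorm_mul _ _).trans (mul_le_mul_of_nonneg_right (l2_opNorm_mul _ _) (norm_nonneg _))
    _ ≤ 1 * ‖P‖ * 1 := by
        rw [l2_opNorm_transpose]
        gcongr
    _ = ‖P‖ := by ring

/-- With `A = U Σ Vᵀ` a compact SVD with `σ₁(Σ) = 1`, `X ∈ St(m,r)`, `Y ∈ St(n,r)`,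
`Θ = Xᵀ A Y` and Riemannian gradient `E = −(I − XXᵀ) A Y Θᵀ`, one has
`σ₁(EᵀE) ≤ σ₁(I − ΦΦᵀ)` where `Φ = Uᵀ X`. -/
theorem riemannian_grad_norm_bound {m n r rA : ℕ} (hr : rA ≤ r)
    (U : Matrix (Fin m) (Fin rA) ℝ) (hU : Uᵀ * U = 1)
    (V : Matrix (Fin n) (Fin rA) ℝ) (hV : Vᵀ * V = 1)
    (S : Matrix (Fin rA) (Fin rA) ℝ) (hSd : S.IsDiag) (hSpos : ∀ i, 0 < S i i)
    (hS1 : specNorm S = 1)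
    (X : Matrix (Fin m) (Fin r) ℝ) (hX : Xᵀ * X = 1)
    (Y : Matrix (Fin n) (Fin r) ℝ) (hY : Yᵀ * Y = 1)
    (A : Matrix (Fin m) (Fin n) ℝ) (hA : A = U * S * Vᵀ)
    (Θ : Matrix (Fin r) (Fin r) ℝ) (hΘ : Θ = Xᵀ * A * Y)
    (E : Matrix (Fin m) (Fin r) ℝ) (hE : E = -((1 - X * Xᵀ) * A * Y * Θᵀ)) :
    specNorm (Eᵀ * E) ≤ specNorm (1 - (Uᵀ * X) * (Uᵀ * X)ᵀ) :=
  riemannian_grad_norm_bound_general U hU V hV S hS1 X hX Y hY A hA Θ hΘ E hE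
end

section
/- Let X ∈ St(m,r), let U_⊥ ∈ ℝ^{m×(m−r_A)} have orthonormal columns spanning the orthogonal complement of the column space of U where A = UΣVᵀ (compact SVD). Let Y ∈ St(n,r), Θ = XᵀAY, E = −(I_m − XXᵀ)AYΘᵀ, η ∈ (0,1), and define X⁺ = (X − ηE)(I_r + η²EᵀE)^{−1/2}. Let Ω = U_⊥ᵀX and Ω⁺ = U_⊥ᵀX⁺. If σ₁(ΘΘᵀ) ≤ 1, then Ω⁺(Ω⁺)ᵀ ⪯ ΩΩᵀ. -/
/-!
Since `U_⊥ᵀ A = 0`, the step acts on `Ω` by right multiplication: `Ω⁺ = Ω B P^{-1/2}` with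
`B = I − η ΘΘᵀ` and `P = I + η² EᵀE`. Both factors are contractions. The bound `σ₁(ΘΘᵀ) ≤ 1`
gives `ΘᵀΘ ⪯ I` (the two products have the same nonzero spectrum), hence
`(ΘΘᵀ)² = Θ (ΘᵀΘ) Θᵀ ⪯ ΘΘᵀ` and `I − B² = η(2 − η) ΘΘᵀ + η² (ΘΘᵀ − (ΘΘᵀ)²) ⪰ 0`;
and `P ⪰ I` gives `P^{-1} ⪯ I`. Conjugating, `B P^{-1} B ⪯ B² ⪯ I`, so
`Ω⁺Ω⁺ᵀ = Ω (B P^{-1} B) Ωᵀ ⪯ ΩΩᵀ`.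
-/

open Matrix

open scoped ComplexOrder in
/-- The positive semidefinite square root of a positive semidefinite matrix
(the definition `Matrix.PosSemidef.sqrt` of the older Mathlib, since removed). -/
noncomputable def Matrix.PosSemidef.sqrt {n 𝕜 : Type*} [Fintype n] [DecidableEq n] [RCLike 𝕜]
    {A : Matrix n n 𝕜} (hA : A.PosSemidef) : Matrix n n 𝕜 :=
  hA.1.eigenvectorUnitary.1 * diagonal ((↑) ∘ (√·) ∘ hA.1.eigenvalues) *
  (star hA.1.eigenvectorUnitary : Matrix n n 𝕜)

open scoped ComplexOrder MatrixOrder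

section StarOrderedRing

variable {R : Type*} [Semiring R] [PartialOrder R] [StarRing R] [StarOrderedRing R]

theorem mul_self_le_one_of_mul_mul_eq_one {S P : R} (hS : IsSelfAdjoint S) (hP : 1 ≤ P)
    (hSPS : S * P * S = 1) : S * S ≤ 1 :=
  calc S * S = star S * 1 * S := by rw [hS.star_eq, mul_one]
    _ ≤ star S * P * S := star_left_conjugate_le_conjugate hP S
    _ = 1 := by rw [hS.star_eq, hSPS]

theorem mul_mul_star_le_one {B S : R} (hB : IsSelfAdjoint B) (hBB : B * B ≤ 1)
    (hSS : S * star S ≤ 1) : B * S * star (B * S) ≤ 1 :=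
  calc B * S * star (B * S) = B * (S * star S) * star B := by
        rw [star_mul, mul_assoc, mul_assoc, mul_assoc]
    _ ≤ B * 1 * star B := star_right_conjugate_le_conjugate hSS B
    _ = B * B := by rw [mul_one, hB.star_eq]
    _ ≤ 1 := hBB

end StarOrderedRing

section ContinuousFunctionalCalculus

variable {A : Type*} [TopologicalSpace A] [Ring A] [StarRing A] [PartialOrder A]
  [StarOrderedRing A] [Algebra ℝ A] [ContinuousFunctionalCalculus ℝ A IsSelfAdjoint]
  [NonnegSpectrumClass ℝ A]

theorem star_mul_self_le_one_of_mul_star_self_le_one {a : A} (h : a * star a ≤ 1) :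
    star a * a ≤ 1 := by
  rw [CFC.le_one_iff (R := ℝ) _ (IsSelfAdjoint.star_mul_self a)]
  intro x hx
  rcases eq_or_ne x 0 with rfl | hx0
  · exact zero_le_one
  have hx' : x ∈ spectrum ℝ (a * star a) \ {0} := by
    rw [← spectrum.nonzero_mul_comm]
    exact ⟨hx, hx0⟩
  exact (CFC.le_one_iff (R := ℝ) _ (IsSelfAdjoint.mul_star_self a)).1 h x hx'.1

end ContinuousFunctionalCalculus

section PosSMulMono

variable {A : Type*} [Ring A] [PartialOrder A] [StarRing A] [StarOrderedRing A] [Algebra ℝ A]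
  [PosSMulMono ℝ A]

theorem one_sub_smul_mul_self_le_one {a : A} (ha : star a * a ≤ 1) {η : ℝ} (hη0 : 0 ≤ η)
    (hη2 : η ≤ 2) : (1 - η • (a * star a)) * (1 - η • (a * star a)) ≤ 1 := by
  have hM : 0 ≤ a * star a := mul_star_self_nonneg a
  have hM2 : 0 ≤ a * (1 - star a * a) * star a :=
    star_right_conjugate_nonneg (sub_nonneg.2 ha) a
  have hconj : a * (1 - star a * a) * star a = a * star a - a * star a * (a * star a) := by
    simp only [mul_sub, sub_mul, mul_one, mul_assoc]
  have h : 1 - (1 - η • (a * star a)) * (1 - η • (a * star a)) =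
      (η * (2 - η)) • (a * star a) + (η ^ 2) • (a * (1 - star a * a) * star a) := by
    rw [hconj]
    simp only [mul_sub, sub_mul, mul_one, one_mul, smul_mul_assoc, mul_smul_comm]
    module
  rw [← sub_nonneg, h]
  exact add_nonneg (smul_nonneg (by nlinarith) hM) (smul_nonneg (sq_nonneg η) hM2)

end PosSMulMono

theorem sqrt_le_specNorm_of_mem_spectrum {a b : ℕ} (M : Matrix (Fin a) (Fin b) ℝ) {e : ℝ}
    (he : e ∈ spectrum ℝ (Mᵀ * M)) : √e ≤ specNorm M := by
  refine Real.sqrt_le_sqrt (le_csSup (Module.End.finite_hasEigenvalue _).bddAbove ?_)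
  rwa [Set.mem_ofPred_eq, Module.End.hasEigenvalue_iff_mem_spectrum, Matrix.spectrum_toLin']

theorem abs_le_specNorm_of_mem_spectrum {a : ℕ} {M : Matrix (Fin a) (Fin a) ℝ} (hM : Mᵀ = M)
    {x : ℝ} (hx : x ∈ spectrum ℝ M) : |x| ≤ specNorm M := by
  rw [← Real.sqrt_sq_eq_abs]
  apply sqrt_le_specNorm_of_mem_spectrum
  rw [hM, ← sq]
  exact spectrum.pow_mem_pow M 2 hx

theorem Matrix.le_one_of_specNorm_le_one {a : ℕ} {M : Matrix (Fin a) (Fin a) ℝ}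
    (hM : M.IsHermitian) (h : specNorm M ≤ 1) : M ≤ 1 := by
  rw [CFC.le_one_iff (R := ℝ) M hM.isSelfAdjoint]
  have hMT : Mᵀ = M := by simpa using hM.eq
  exact fun x hx => (le_abs_self x).trans ((abs_le_specNorm_of_mem_spectrum hMT hx).trans h)

theorem Matrix.transpose_mul_eq_zero_of_mul_transpose_add_mul_transpose_eq_one
    {m k l R : Type*} [Fintype m] [Fintype k] [Fintype l] [DecidableEq m] [DecidableEq k]
    [DecidableEq l] [Ring R] {U : Matrix m k R} {W : Matrix m l R} (hU : Uᵀ * U = 1)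
    (hW : Wᵀ * W = 1) (h : U * Uᵀ + W * Wᵀ = 1) : Wᵀ * U = 0 := by
  have h' := congrArg (fun M => Wᵀ * M * U) h
  simp only [Matrix.mul_add, Matrix.add_mul, Matrix.mul_one, Matrix.mul_assoc, hU] at h'
  simp only [← Matrix.mul_assoc, hW, Matrix.one_mul] at h'
  exact add_eq_left.mp h'

theorem Matrix.posSemidef_mul_conjTranspose_sub_of_mul_star_le_one {m n 𝕜 : Type*}
    [Fintype n] [Finite m] [DecidableEq n] [RCLike 𝕜] (Ω : Matrix m n 𝕜) {C : Matrix n n 𝕜}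
    (hC : C * star C ≤ 1) : (Ω * Ωᴴ - Ω * C * (Ω * C)ᴴ).PosSemidef := by
  have h : Ω * Ωᴴ - Ω * C * (Ω * C)ᴴ = Ω * (1 - C * star C) * Ωᴴ := by
    simp only [conjTranspose_mul, Matrix.mul_sub, Matrix.sub_mul, Matrix.mul_one,
      Matrix.mul_assoc, star_eq_conjTranspose]
  rw [h]
  exact (Matrix.le_iff.1 hC).mul_mul_conjTranspose_same Ω

namespace Matrix.PosSemidef

variable {n 𝕜 : Type*} [Fintype n] [DecidableEq n] [RCLike 𝕜] {A : Matrix n n 𝕜}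

theorem posSemidef_sqrt (hA : A.PosSemidef) : hA.sqrt.PosSemidef :=
  mul_mul_conjTranspose_same
    (posSemidef_diagonal_iff.2 fun _ ↦ RCLike.ofReal_nonneg.2 (Real.sqrt_nonneg _)) _

theorem sqrt_mul_self (hA : A.PosSemidef) : hA.sqrt * hA.sqrt = A := by
  let C : Matrix n n 𝕜 := hA.1.eigenvectorUnitary
  let E := diagonal ((↑) ∘ Real.sqrt ∘ hA.1.eigenvalues : n → 𝕜)
  suffices C * (E * (star C * C) * E) * star C = A by
    change (C * E * star C) * (C * E * star C) = A
    simpa only [← Matrix.mul_assoc] using this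
  have hC : star C * C = 1 := by simp [C]
  have hE : E * E = diagonal ((↑) ∘ hA.1.eigenvalues) := by
    rw [diagonal_mul_diagonal]
    congr! with v
    simp [← pow_two, ← RCLike.ofReal_pow, Real.sq_sqrt (hA.eigenvalues_nonneg v)]
  rw [hC, Matrix.mul_one, hE]
  exact hA.1.spectral_theorem.symm

theorem inv_sqrt_mul_mul_inv_sqrt (hA : A.PosSemidef) (hu : IsUnit A) :
    hA.sqrt⁻¹ * A * hA.sqrt⁻¹ = 1 := by
  have hs : IsUnit hA.sqrt.det :=
    (isUnit_iff_isUnit_det _).1 (isUnit_of_mul_isUnit_left (hA.sqrt_mul_self ▸ hu))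
  nth_rw 2 [← hA.sqrt_mul_self]
  rw [← Matrix.mul_assoc, nonsing_inv_mul _ hs, Matrix.one_mul, mul_nonsing_inv _ hs]

theorem inv_sqrt_mul_star_le_one (hA : A.PosSemidef) (h1 : 1 ≤ A) :
    hA.sqrt⁻¹ * star hA.sqrt⁻¹ ≤ 1 := by
  have hsa : IsSelfAdjoint hA.sqrt⁻¹ := hA.posSemidef_sqrt.1.inv.isSelfAdjoint
  have hu : IsUnit A := by
    simpa using (PosDef.one.add_posSemidef (Matrix.le_iff.1 h1)).isUnit
  rw [hsa.star_eq]
  exact mul_self_le_one_of_mul_mul_eq_one hsa h1 (hA.inv_sqrt_mul_mul_inv_sqrt hu)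

end Matrix.PosSemidef

theorem misalignment_nonincreasing_general {m n r rA : ℕ}
    (η : ℝ) (hη0 : 0 < η) (hη1 : η < 1)
    (U : Matrix (Fin m) (Fin rA) ℝ) (hU : Uᵀ * U = 1)
    (Uperp : Matrix (Fin m) (Fin (m - rA)) ℝ) (hUperp : Uperpᵀ * Uperp = 1)
    (hcompl : U * Uᵀ + Uperp * Uperpᵀ = 1)
    (V : Matrix (Fin n) (Fin rA) ℝ)
    (S : Matrix (Fin rA) (Fin rA) ℝ)
    (X : Matrix (Fin m) (Fin r) ℝ)
    (Y : Matrix (Fin n) (Fin r) ℝ)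
    (A : Matrix (Fin m) (Fin n) ℝ) (hA : A = U * S * Vᵀ)
    (Θ : Matrix (Fin r) (Fin r) ℝ) (hΘ : Θ = Xᵀ * A * Y)
    (E : Matrix (Fin m) (Fin r) ℝ) (hE : E = -((1 - X * Xᵀ) * A * Y * Θᵀ))
    (hP : ((1 : Matrix (Fin r) (Fin r) ℝ) + η ^ 2 • (Eᵀ * E)).PosSemidef)
    (hΘ1 : specNorm (Θ * Θᵀ) ≤ 1) :
    ((Uperpᵀ * X) * (Uperpᵀ * X)ᵀ -
        (Uperpᵀ * ((X - η • E) * hP.sqrt⁻¹)) *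
          (Uperpᵀ * ((X - η • E) * hP.sqrt⁻¹))ᵀ).PosSemidef := by
  have hUperpA : Uperpᵀ * A = 0 := by
    rw [hA, Matrix.mul_assoc, ← Matrix.mul_assoc,
      transpose_mul_eq_zero_of_mul_transpose_add_mul_transpose_eq_one hU hUperp hcompl,
      Matrix.zero_mul]
  have hUperpE : Uperpᵀ * E = Uperpᵀ * X * (Θ * star Θ) := by
    rw [hE]
    simp only [Matrix.mul_neg, Matrix.sub_mul, Matrix.mul_sub, Matrix.one_mul, Matrix.mul_assoc]
    rw [← Matrix.mul_assoc Uperpᵀ A, hUperpA, Matrix.zero_mul, zero_sub, neg_neg, hΘ]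
    simp only [Matrix.mul_assoc, star_eq_conjTranspose, conjTranspose_eq_transpose_of_trivial]
  set B := 1 - η • (Θ * star Θ)
  set Si := hP.sqrt⁻¹
  have hΩplus : Uperpᵀ * ((X - η • E) * Si) = Uperpᵀ * X * (B * Si) := by
    rw [← Matrix.mul_assoc, Matrix.mul_sub, Matrix.mul_smul, hUperpE]
    simp only [B, Matrix.mul_sub, Matrix.sub_mul, Matrix.mul_smul, Matrix.smul_mul,
      Matrix.one_mul, Matrix.mul_assoc]
  have hΘΘ : star Θ * Θ ≤ 1 := star_mul_self_le_one_of_mul_star_self_le_one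
    (le_one_of_specNorm_le_one (isHermitian_mul_conjTranspose_self Θ) hΘ1)
  have hBsa : IsSelfAdjoint B :=
    (IsSelfAdjoint.one _).sub ((IsSelfAdjoint.all η).smul (IsSelfAdjoint.mul_star_self Θ))
  have hB : B * B ≤ 1 := one_sub_smul_mul_self_le_one hΘΘ hη0.le (by linarith)
  have hSi : Si * star Si ≤ 1 := hP.inv_sqrt_mul_star_le_one <| le_add_of_nonneg_right
    ((posSemidef_conjTranspose_mul_self E).smul (sq_nonneg η)).nonneg
  rw [hΩplus]
  exact posSemidef_mul_conjTranspose_sub_of_mul_star_le_one (Uperpᵀ * X)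
    (mul_mul_star_le_one hBsa hB hSi)

/-- One retraction-based Riemannian step does not increase the misalignment:
with `A = U Σ Vᵀ`, `U_⊥` an orthonormal basis of the orthogonal complement of the
column span of `U`, `Θ = Xᵀ A Y`, `E = −(I − XXᵀ) A Y Θᵀ`, `η ∈ (0,1)`,
`X⁺ = (X − ηE)(I + η²EᵀE)^{−1/2}`, `Ω = U_⊥ᵀ X`, `Ω⁺ = U_⊥ᵀ X⁺`, and
`σ₁(ΘΘᵀ) ≤ 1`, we have `Ω⁺(Ω⁺)ᵀ ⪯ ΩΩᵀ`. -/
theorem misalignment_nonincreasing {m n r rA : ℕ} (hr : rA ≤ r)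
    (η : ℝ) (hη0 : 0 < η) (hη1 : η < 1)
    (U : Matrix (Fin m) (Fin rA) ℝ) (hU : Uᵀ * U = 1)
    (Uperp : Matrix (Fin m) (Fin (m - rA)) ℝ) (hUperp : Uperpᵀ * Uperp = 1)
    (hcompl : U * Uᵀ + Uperp * Uperpᵀ = 1)
    (V : Matrix (Fin n) (Fin rA) ℝ) (hV : Vᵀ * V = 1)
    (S : Matrix (Fin rA) (Fin rA) ℝ) (hSd : S.IsDiag) (hSpos : ∀ i, 0 < S i i)
    (X : Matrix (Fin m) (Fin r) ℝ) (hX : Xᵀ * X = 1)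
    (Y : Matrix (Fin n) (Fin r) ℝ) (hY : Yᵀ * Y = 1)
    (A : Matrix (Fin m) (Fin n) ℝ) (hA : A = U * S * Vᵀ)
    (Θ : Matrix (Fin r) (Fin r) ℝ) (hΘ : Θ = Xᵀ * A * Y)
    (E : Matrix (Fin m) (Fin r) ℝ) (hE : E = -((1 - X * Xᵀ) * A * Y * Θᵀ))
    (hP : ((1 : Matrix (Fin r) (Fin r) ℝ) + η ^ 2 • (Eᵀ * E)).PosSemidef)
    (hΘ1 : specNorm (Θ * Θᵀ) ≤ 1) :
    ((Uperpᵀ * X) * (Uperpᵀ * X)ᵀ -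
        (Uperpᵀ * ((X - η • E) * hP.sqrt⁻¹)) *
          (Uperpᵀ * ((X - η • E) * hP.sqrt⁻¹))ᵀ).PosSemidef :=
  misalignment_nonincreasing_general η hη0 hη1 U hU Uperp hUperp hcompl V S X Y A hA Θ hΘ E hE hP
    hΘ1
end

section
/- Let Φ, Ψ ∈ ℝ^{r_A×r} with σ₁(Φ) ≤ 1, σ₁(Ψ) ≤ 1, and let Σ be an r_A×r_A positive definite diagonal matrix with σ₁(Σ) = 1 and σ_{r_A}(Σ) = 1/κ. Write the eigendecomposition ΦΦᵀ = QΛQᵀ with Q orthogonal and 0 ⪯ Λ ⪯ I. Then Tr((I_{r_A} − ΦΦᵀ) Σ Ψ Ψᵀ Σ ΦΦᵀ) ≥ (σ_{r_A}(Ψ)²/κ²) · Tr((I_{r_A} − ΦΦᵀ)ΦΦᵀ). -/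
/-!
Write `P = ΦΦᵀ`. Since `σ₁(Φ) ≤ 1` means `ΦᵀΦ ≤ 1` in the Loewner order,
`P(1 - P) = Φ(1 - ΦᵀΦ)Φᵀ` is positive semidefinite. Moreover `ΨΨᵀ ≥ λ_min(ΨΨᵀ)·1` and
`Σ² ≥ κ⁻²·1`, so conjugating by `Σ` gives `ΣΨΨᵀΣ ≥ (λ_min(ΨΨᵀ)/κ²)·1`. For `M ≥ c·1` and `X ≥ 0`
one has `Tr(MX) ≥ c·Tr X`, because `Tr((M - c)X) = Tr(√(M - c) X √(M - c)) ≥ 0`; by cyclicity of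
the trace, `Tr((1 - P)ΣΨΨᵀΣP) = Tr(ΣΨΨᵀΣ · P(1 - P))`.
-/

open Matrix

open scoped MatrixOrder

namespace Matrix

variable {m n 𝕜 : Type*} [Fintype m] [Fintype n] [DecidableEq n] [RCLike 𝕜]

theorem IsHermitian.smul_one_le_of_forall_le_eigenvalues {A : Matrix n n 𝕜} (hA : A.IsHermitian)
    {c : ℝ} (h : ∀ i, c ≤ hA.eigenvalues i) : c • 1 ≤ A := by
  rw [← Algebra.algebraMap_eq_smul_one, algebraMap_le_iff_le_spectrum hA.isSelfAdjoint,
    hA.spectrum_real_eq_range_eigenvalues]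
  rintro _ ⟨i, rfl⟩
  exact h i

section

open scoped ComplexOrder

theorem trace_mul_nonneg {A B : Matrix n n 𝕜} (hA : 0 ≤ A) (hB : 0 ≤ B) : 0 ≤ (A * B).trace := by
  have hsqrt : 0 ≤ CFC.sqrt A * B * CFC.sqrt A := by
    simpa [(CFC.sqrt_nonneg A).isSelfAdjoint.star_eq] using
      star_left_conjugate_nonneg hB (CFC.sqrt A)
  rw [← CFC.sqrt_mul_sqrt_self A hA, Matrix.mul_assoc, trace_mul_comm, Matrix.mul_assoc]
  simpa [Matrix.mul_assoc] using (nonneg_iff_posSemidef.mp hsqrt).trace_nonneg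

theorem smul_trace_le_trace_mul {A X : Matrix n n 𝕜} {c : ℝ} (hA : c • 1 ≤ A) (hX : 0 ≤ X) :
    c • X.trace ≤ (A * X).trace := by
  have := trace_mul_nonneg (sub_nonneg.mpr hA) hX
  rwa [sub_mul, trace_sub, smul_mul, one_mul, trace_smul, sub_nonneg] at this

theorem mul_conjTranspose_mul_one_sub_nonneg [DecidableEq m] {Φ : Matrix m n 𝕜} (h : Φᴴ * Φ ≤ 1) :
    0 ≤ Φ * Φᴴ * (1 - Φ * Φᴴ) := by
  have key : Φ * Φᴴ * (1 - Φ * Φᴴ) = Φ * (1 - Φᴴ * Φ) * Φᴴ := by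
    simp only [Matrix.mul_sub, Matrix.sub_mul, Matrix.mul_one, Matrix.mul_assoc]
  rw [key, nonneg_iff_posSemidef]
  exact (le_iff.mp h).mul_mul_conjTranspose_same Φ

end

theorem IsDiag.sq_smul_one_le_mul_self {S : Matrix n n ℝ} (hS : S.IsDiag) {d : ℝ} (hd : 0 ≤ d)
    (h : ∀ i, d ≤ S i i) : d ^ 2 • 1 ≤ S * S := by
  rw [le_iff, ← hS.diagonal_diag, diagonal_mul_diagonal, smul_one_eq_diagonal, diagonal_sub]
  have hsq : ∀ i, d ^ 2 ≤ S i i * S i i := fun i =>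
    sq d ▸ mul_le_mul (h i) (h i) hd (hd.trans (h i))
  exact PosSemidef.diagonal fun i => sub_nonneg.mpr (hsq i)

theorem IsDiag.smul_one_le_mul_mul {S A : Matrix n n ℝ} (hS : S.IsDiag) {c d : ℝ} (hc : 0 ≤ c)
    (hd : 0 ≤ d) (hdS : ∀ i, d ≤ S i i) (hA : c • 1 ≤ A) : (c * d ^ 2) • 1 ≤ S * A * S := calc
  (c * d ^ 2) • (1 : Matrix n n ℝ) = c • (d ^ 2 • 1) := smul_smul c _ _ |>.symm
  _ ≤ c • (S * S) := smul_le_smul_of_nonneg_left (hS.sq_smul_one_le_mul_self hd hdS) hc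
  _ = S * (c • 1) * S := by simp
  _ ≤ S * A * S := (isHermitian_iff_isSymm.mpr hS.isSymm).isSelfAdjoint.conjugate_le_conjugate hA

end Matrix

theorem transpose_mul_self_le_one_of_specNorm_le_one {a b : ℕ} {M : Matrix (Fin a) (Fin b) ℝ}
    (h : specNorm M ≤ 1) : Mᵀ * M ≤ 1 := by
  have hH : (Mᵀ * M).IsHermitian := by
    simpa using isHermitian_conjTranspose_mul_self M
  rw [← map_one (algebraMap ℝ _), le_algebraMap_iff_spectrum_le hH.isSelfAdjoint]
  intro x hx
  have hmem : x ∈ {e : ℝ | Module.End.HasEigenvalue (Matrix.toLin' (Mᵀ * M)) e} := by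
    rwa [Set.mem_ofPred_eq, Module.End.hasEigenvalue_iff_mem_spectrum, spectrum_toLin']
  exact (le_csSup (Module.End.finite_hasEigenvalue _).bddAbove hmem).trans (Real.sqrt_le_one.mp h)

theorem alignment_trace_lower_bound_general {r rA : ℕ} (κ : ℝ)
    (Φ Ψ : Matrix (Fin rA) (Fin r) ℝ)
    (hΦ : specNorm Φ ≤ 1)
    (S : Matrix (Fin rA) (Fin rA) ℝ) (hSd : S.IsDiag) (hSpd : S.PosDef)
    (hsmin : IsLeast (Set.range fun i => S i i) (1 / κ))
    (hΨH : (Ψ * Ψᵀ).IsHermitian) :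
    ((⨅ i, hΨH.eigenvalues i) / κ ^ 2) *
        (((1 : Matrix (Fin rA) (Fin rA) ℝ) - Φ * Φᵀ) * (Φ * Φᵀ)).trace ≤
      (((1 : Matrix (Fin rA) (Fin rA) ℝ) - Φ * Φᵀ) * S * Ψ * Ψᵀ * S * (Φ * Φᵀ)).trace := by
  set μ := ⨅ i, hΨH.eigenvalues i
  have hμ : 0 ≤ μ :=
    Real.iInf_nonneg fun i => (posSemidef_self_mul_conjTranspose Ψ).eigenvalues_nonneg i
  have hκ : 0 ≤ 1 / κ := by
    obtain ⟨i, hi⟩ := hsmin.1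
    exact hi ▸ hSpd.diag_pos.le
  have hΨΨ : μ • 1 ≤ Ψ * Ψᵀ :=
    hΨH.smul_one_le_of_forall_le_eigenvalues fun i => ciInf_le (Finite.bddBelow_range _) i
  have hM : (μ / κ ^ 2) • 1 ≤ S * (Ψ * Ψᵀ) * S := by
    rw [div_eq_mul_one_div, ← _root_.one_div_pow]
    exact hSd.smul_one_le_mul_mul hμ hκ (fun i => hsmin.2 ⟨i, rfl⟩) hΨΨ
  have hP : 0 ≤ Φ * Φᵀ * (1 - Φ * Φᵀ) := by
    have hΦΦ := transpose_mul_self_le_one_of_specNorm_le_one hΦ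
    rw [← conjTranspose_eq_transpose_of_trivial] at hΦΦ ⊢
    exact mul_conjTranspose_mul_one_sub_nonneg hΦΦ
  calc (μ / κ ^ 2) * ((1 - Φ * Φᵀ) * (Φ * Φᵀ)).trace
      = (μ / κ ^ 2) • (Φ * Φᵀ * (1 - Φ * Φᵀ)).trace := by rw [smul_eq_mul, trace_mul_comm]
    _ ≤ (S * (Ψ * Ψᵀ) * S * (Φ * Φᵀ * (1 - Φ * Φᵀ))).trace := smul_trace_le_trace_mul hM hP
    _ = (Φ * Φᵀ * ((1 - Φ * Φᵀ) * S * Ψ * Ψᵀ * S)).trace := by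
      rw [trace_mul_comm]; simp only [Matrix.mul_assoc]
    _ = ((1 - Φ * Φᵀ) * S * Ψ * Ψᵀ * S * (Φ * Φᵀ)).trace := trace_mul_comm _ _

/-- Let `Φ, Ψ` have singular values at most `1`, and `Σ` be a positive definite
diagonal matrix with `σ₁(Σ) = 1` and smallest (diagonal) singular value `1/κ`.
Then `Tr((I − ΦΦᵀ) Σ ΨΨᵀ Σ ΦΦᵀ) ≥ (σ_{r_A}(Ψ)²/κ²) · Tr((I − ΦΦᵀ) ΦΦᵀ)`,
where `σ_{r_A}(Ψ)²` is the smallest eigenvalue of `ΨΨᵀ`. -/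
theorem alignment_trace_lower_bound {r rA : ℕ} (κ : ℝ)
    (Φ Ψ : Matrix (Fin rA) (Fin r) ℝ)
    (hΦ : specNorm Φ ≤ 1) (hΨ : specNorm Ψ ≤ 1)
    (S : Matrix (Fin rA) (Fin rA) ℝ) (hSd : S.IsDiag) (hSpd : S.PosDef)
    (hs1 : specNorm S = 1)
    (hsmin : IsLeast (Set.range fun i => S i i) (1 / κ))
    (hΨH : (Ψ * Ψᵀ).IsHermitian) :
    ((⨅ i, hΨH.eigenvalues i) / κ ^ 2) *
        (((1 : Matrix (Fin rA) (Fin rA) ℝ) - Φ * Φᵀ) * (Φ * Φᵀ)).trace ≤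
      (((1 : Matrix (Fin rA) (Fin rA) ℝ) - Φ * Φᵀ) * S * Ψ * Ψᵀ * S * (Φ * Φᵀ)).trace :=
  alignment_trace_lower_bound_general κ Φ Ψ hΦ S hSd hSpd hsmin hΨH
end
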